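/- For 2/3 < α < 1, the distance functional Δ_{αℤ,ℝ} := inf over nonzero finitely-supported integer sequences n of ‖P_{1-α} n‖_{ℓ²(ℤ)} equals 0, where P_{1-α} is the orthogonal projection on ℓ²(ℤ) acting on the Fourier side as multiplication by the 1-periodic indicator of (-(1-α)/2, (1-α)/2). -/

import Mathlib

/-! For the witness `n_N = signedBinomial N = ((-1)^(N-k) C(N,k))_k` the symbol
`ĉ(t) = trigPoly n_N t = Σ_k n_k e^{2πikt}` is `(e^{2πit} - 1)^N`, of modulus `(2 |sin πt|)^N`.
By Parseval on a unit period, `‖P_β n_N‖² = Σ_j (bandProj β n_N j)² = ∫_{-β/2}^{β/2} |ĉ(t)|² dt`,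
which is at most `β (2 sin(πβ/2))^(2N)`. For `β = 1 - α < 1/3` the base `2 sin(πβ/2)` is below
`2 sin(π/6) = 1`, so these norms tend to `0`. -/

open Real

/-- Normalized cardinal sine. -/
noncomputable def sinc (x : ℝ) : ℝ :=
  if x = 0 then 1 else Real.sin (Real.pi * x) / (Real.pi * x)

open MeasureTheory Finset

lemma integral_exp_eq_mul_sinc (β ξ : ℝ) :
    ∫ t in -(β / 2)..β / 2, Complex.exp (-2 * π * Complex.I * ξ * t) =
      (β * _root_.sinc (β * ξ) : ℝ) := by
  rcases eq_or_ne ξ 0 with rfl | hξ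
  · simp [_root_.sinc]
  rcases eq_or_ne β 0 with rfl | hβ
  · simp
  have hc : -2 * π * Complex.I * ξ ≠ 0 := by simp [Real.pi_ne_zero, hξ]
  rw [integral_exp_mul_complex hc, _root_.sinc, if_neg (mul_ne_zero hβ hξ)]
  have hβ' : (β : ℂ) ≠ 0 := by exact_mod_cast hβ
  push_cast
  rw [Complex.sin]
  field_simp
  ring_nf
  rw [Complex.I_sq]
  ring

noncomputable def trigPoly (c : ℤ →₀ ℝ) (t : ℝ) : ℂ :=
  c.sum fun k a => a * Complex.exp (2 * π * Complex.I * k * t)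

noncomputable def bandProj (β : ℝ) (c : ℤ →₀ ℝ) (j : ℤ) : ℝ :=
  ∑' k : ℤ, β * _root_.sinc (β * ((j : ℝ) - (k : ℝ))) * c k

lemma continuous_trigPoly (c : ℤ →₀ ℝ) : Continuous (trigPoly c) := by
  unfold trigPoly Finsupp.sum
  fun_prop

lemma bandProj_eq_sum (β : ℝ) (c : ℤ →₀ ℝ) (j : ℤ) :
    bandProj β c j = c.sum fun k a => β * _root_.sinc (β * ((j : ℝ) - (k : ℝ))) * a :=
  tsum_eq_sum fun k hk => by simp [Finsupp.notMem_support_iff.mp hk]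

lemma intervalIntegral_indicator_Ioc {E : Type*} [NormedAddCommGroup E] [NormedSpace ℝ E]
    {a b a' b' : ℝ} (ha : a ≤ a') (hab' : a' ≤ b') (hb : b' ≤ b) (f : ℝ → E) :
    ∫ x in a..b, (Set.Ioc a' b').indicator f x = ∫ x in a'..b', f x := by
  rw [intervalIntegral.integral_of_le (ha.trans (hab'.trans hb)),
    setIntegral_indicator measurableSet_Ioc,
    Set.inter_eq_right.mpr (Set.Ioc_subset_Ioc ha hb), intervalIntegral.integral_of_le hab']

lemma fourierCoeffOn_indicator_trigPoly {a b β : ℝ} (hab : a < b) (hperiod : b - a = 1)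
    (ha : a ≤ -(β / 2)) (hβ : 0 ≤ β) (hb : β / 2 ≤ b) (c : ℤ →₀ ℝ) (j : ℤ) :
    fourierCoeffOn hab ((Set.Ioc (-(β / 2)) (β / 2)).indicator (trigPoly c)) j =
      bandProj β c j := by
  have hmode (x : ℝ) : fourier (-j) (x : AddCircle (1 : ℝ)) • trigPoly c x =
      c.sum fun k a => a * Complex.exp (-2 * π * Complex.I * (j - k : ℝ) * x) := by
    rw [fourier_coe_apply, Complex.ofReal_one, div_one, trigPoly, smul_eq_mul, Finsupp.mul_sum]
    refine Finsupp.sum_congr fun k _ => ?_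
    rw [mul_left_comm, ← Complex.exp_add]
    push_cast
    ring_nf
  rw [fourierCoeffOn_eq_integral, hperiod, div_one, one_smul, ← Set.indicator_smul]
  simp_rw [hmode]
  rw [intervalIntegral_indicator_Ioc ha (by linarith) hb]
  unfold Finsupp.sum
  rw [intervalIntegral.integral_finsetSum fun k _ => by
    apply Continuous.intervalIntegrable; fun_prop]
  simp_rw [intervalIntegral.integral_const_mul, integral_exp_eq_mul_sinc, bandProj_eq_sum]
  rw [Finsupp.sum, Complex.ofReal_sum]
  exact Finset.sum_congr rfl fun k _ => by push_cast; ring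

lemma tsum_sq_bandProj_eq_integral {β : ℝ} (hβ0 : 0 ≤ β) (hβ1 : β ≤ 1) (c : ℤ →₀ ℝ) :
    ∑' j : ℤ, bandProj β c j ^ 2 = ∫ t in -(β / 2)..β / 2, ‖trigPoly c t‖ ^ 2 := by
  have hab : -(1 / 2 : ℝ) < 1 / 2 := by norm_num
  have hL2 : MemLp ((Set.Ioc (-(β / 2)) (β / 2)).indicator (trigPoly c)) 2
      (volume.restrict (Set.Ioc (-(1 / 2)) (1 / 2))) :=
    ((memLp_two_iff_integrable_sq_norm (continuous_trigPoly c).aestronglyMeasurable).2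
      ((continuous_trigPoly c).norm.pow 2).integrableOn_Ioc).indicator measurableSet_Ioc
  have hnorm (x : ℝ) : ‖(Set.Ioc (-(β / 2)) (β / 2)).indicator (trigPoly c) x‖ ^ 2 =
      (Set.Ioc (-(β / 2)) (β / 2)).indicator (‖trigPoly c ·‖ ^ 2) x := by
    by_cases hx : x ∈ Set.Ioc (-(β / 2)) (β / 2) <;> simp [hx]
  have parseval := tsum_sq_fourierCoeffOn hab hL2
  simp_rw [fourierCoeffOn_indicator_trigPoly hab (by norm_num) (by linarith) hβ0 (by linarith),
    Complex.norm_real, Real.norm_eq_abs, sq_abs, hnorm] at parseval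
  rw [parseval, intervalIntegral_indicator_Ioc (by linarith) (by linarith) (by linarith)]
  norm_num

lemma abs_sin_le_sin_of_abs_le {x y : ℝ} (hxy : |x| ≤ y) (hy : y ≤ π / 2) :
    |sin x| ≤ sin y := by
  rw [abs_sin_eq_sin_abs_of_abs_le_pi (by linarith [pi_pos])]
  exact sin_le_sin_of_le_of_le_pi_div_two (by linarith [pi_pos, abs_nonneg x]) hy hxy

noncomputable def signedBinomial (N : ℕ) : ℤ →₀ ℤ :=
  ∑ k ∈ range (N + 1), Finsupp.single (k : ℤ) ((-1) ^ (N - k) * N.choose k)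

lemma signedBinomial_ne_zero (N : ℕ) : signedBinomial N ≠ 0 := by
  refine Finsupp.ne_iff.mpr ⟨N, ?_⟩
  simp [signedBinomial, Finsupp.finsetSum_apply, Finsupp.single_apply]

lemma trigPoly_signedBinomial (N : ℕ) (t : ℝ) :
    trigPoly ((signedBinomial N).mapRange (Int.castAddHom ℝ) (map_zero _)) t =
      (Complex.exp (2 * π * Complex.I * t) - 1) ^ N := by
  rw [signedBinomial, Finsupp.mapRange_finsetSum, trigPoly,
    ← Finsupp.sum_finsetSum_index (by simp) (fun _ _ _ => by push_cast; exact add_mul _ _ _),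
    sub_eq_add_neg, add_pow]
  refine sum_congr rfl fun k _ => ?_
  rw [Finsupp.mapRange_single, Finsupp.sum_single_index (by simp), ← Complex.exp_nat_mul,
    Int.coe_castAddHom]
  push_cast
  ring_nf

lemma norm_trigPoly_signedBinomial (N : ℕ) (t : ℝ) :
    ‖trigPoly ((signedBinomial N).mapRange (Int.castAddHom ℝ) (map_zero _)) t‖ =
      (2 * |sin (π * t)|) ^ N := by
  rw [trigPoly_signedBinomial, norm_pow,
    show 2 * π * Complex.I * t = Complex.I * (2 * π * t : ℝ) by push_cast; ring,
    Complex.norm_exp_I_mul_ofReal_sub_one, show 2 * π * t / 2 = π * t by ring, norm_mul,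
    Real.norm_two, Real.norm_eq_abs]

lemma tsum_sq_bandProj_signedBinomial_le {β : ℝ} (hβ0 : 0 ≤ β) (hβ1 : β ≤ 1) (N : ℕ) :
    ∑' j : ℤ, bandProj β ((signedBinomial N).mapRange (Int.castAddHom ℝ) (map_zero _)) j ^ 2 ≤
      β * (2 * sin (π * β / 2)) ^ (2 * N) := by
  rw [tsum_sq_bandProj_eq_integral hβ0 hβ1]
  refine (Real.le_norm_self _).trans ((intervalIntegral.norm_integral_le_of_norm_le_const
    (C := (2 * sin (π * β / 2)) ^ (2 * N)) fun t ht => ?_).trans_eq ?_)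
  · rw [Set.uIoc_of_le (by linarith)] at ht
    have hsin : |sin (π * t)| ≤ sin (π * β / 2) := by
      refine abs_sin_le_sin_of_abs_le ?_ (by nlinarith [pi_pos])
      rw [abs_mul, abs_of_pos pi_pos]
      nlinarith [pi_pos, abs_le.mpr ⟨ht.1.le, ht.2⟩]
    rw [norm_pow, norm_norm, norm_trigPoly_signedBinomial, ← pow_mul, mul_comm N 2, pow_mul,
      pow_mul]
    gcongr
  · rw [show β / 2 - -(β / 2) = β by ring, abs_of_nonneg hβ0, mul_comm]

lemma sInf_eq_zero_of_le_geometric {S : Set ℝ} {q : ℝ} (hq0 : 0 ≤ q) (hq1 : q < 1)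
    (hS : ∀ r ∈ S, 0 ≤ r) (hle : ∀ N : ℕ, ∃ r ∈ S, r ≤ q ^ N) : sInf S = 0 := by
  refine le_antisymm (ge_of_tendsto' (tendsto_pow_atTop_nhds_zero_of_lt_one hq0 hq1) fun N => ?_)
    (Real.sInf_nonneg hS)
  obtain ⟨r, hr, hrN⟩ := hle N
  exact (csInf_le ⟨0, hS⟩ hr).trans hrN

/-- For `2/3 < α < 1`, the distance functional
`Δ_{αℤ,ℝ} = inf { ‖P_{1-α} n‖ : n nonzero finitely supported integer sequence }`
vanishes, where `P_{1-α}` has matrix entries `(1-α) sinc((1-α)(j-k))`. -/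
theorem stmt12 (α : ℝ) (h1 : 2/3 < α) (h2 : α < 1) :
    sInf {r : ℝ | ∃ n : ℤ →₀ ℤ, n ≠ 0 ∧
      r = Real.sqrt (∑' j : ℤ,
        (∑' k : ℤ, (1 - α) * _root_.sinc ((1 - α) * ((j : ℝ) - (k : ℝ))) * (n k : ℝ)) ^ 2)} = 0 := by
  have hβ0 : 0 ≤ 1 - α := by linarith
  have hβ1 : 1 - α ≤ 1 := by linarith
  have hq0 : 0 ≤ 2 * sin (π * (1 - α) / 2) :=
    mul_nonneg zero_le_two (sin_nonneg_of_nonneg_of_le_pi (by positivity) (by nlinarith [pi_pos]))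
  have hq1 : 2 * sin (π * (1 - α) / 2) < 1 := by
    have := sin_lt_sin_of_lt_of_le_pi_div_two (by nlinarith [pi_pos]) (by linarith [pi_pos])
      (show π * (1 - α) / 2 < π / 6 by nlinarith [pi_pos])
    linarith [sin_pi_div_six]
  refine sInf_eq_zero_of_le_geometric hq0 hq1 (fun r ⟨_, _, hr⟩ => hr ▸ sqrt_nonneg _)
    fun N => ⟨_, ⟨signedBinomial N, signedBinomial_ne_zero N, rfl⟩, ?_⟩
  change √(∑' j : ℤ, bandProj (1 - α)
    ((signedBinomial N).mapRange (Int.castAddHom ℝ) (map_zero _)) j ^ 2) ≤ _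
  rw [sqrt_le_left (pow_nonneg hq0 N), ← pow_mul, mul_comm N 2]
  refine (tsum_sq_bandProj_signedBinomial_le hβ0 hβ1 N).trans ?_
  exact mul_le_of_le_one_left (pow_nonneg hq0 _) hβ1
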